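/- For all n ≥ 3 and m ≥ 1, the simple centralizer of x_{n−1} in SB_{n+m} has cardinality c_{n+m}(x_{n−1}) = 2 · F_{2n−5} · F_{2m−1}. -/

import Mathlib

/-- The defining relations of the positive braid monoid `MB_∞` on generators
`x i`, `i : ℕ+`: the braid relations and the far-commutation relations. -/
def BraidRel : FreeMonoid ℕ+ → FreeMonoid ℕ+ → Prop := fun a b =>
  (∃ i : ℕ+, a = FreeMonoid.of (i + 1) * FreeMonoid.of i * FreeMonoid.of (i + 1) ∧
      b = FreeMonoid.of i * FreeMonoid.of (i + 1) * FreeMonoid.of i) ∨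
  (∃ i j : ℕ+, i + 2 ≤ j ∧ a = FreeMonoid.of i * FreeMonoid.of j ∧
      b = FreeMonoid.of j * FreeMonoid.of i)

/-- The congruence generated by the braid relations. -/
def braidCon : Con (FreeMonoid ℕ+) := conGen BraidRel

/-- The positive braid monoid `MB_∞`. -/
abbrev MB : Type := braidCon.Quotient

/-- The generator `x_i` of `MB_∞`, for `i : ℕ+`. -/
def braidGen (i : ℕ+) : MB := braidCon.mk' (FreeMonoid.of i)

/-- The generator `x_i` of `MB_∞`, indexed by a natural number `i ≥ 1`
(junk value `x_1` for `i = 0`). -/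
def X (i : ℕ) : MB := braidGen ⟨max i 1, lt_of_lt_of_le one_pos (le_max_right i 1)⟩

/-- `x_i` divides `β`: `β = δ * x_i * ε` for some `δ ε ∈ MB_∞`. -/
def GenDvd (i : ℕ) (β : MB) : Prop := ∃ δ ε : MB, β = δ * X i * ε

/-- `x_i` left-divides `β`: `β = x_i * ε` for some `ε ∈ MB_∞`. -/
def GenDvdL (i : ℕ) (β : MB) : Prop := ∃ ε : MB, β = X i * ε

/-- `x_i` right-divides `β`: `β = δ * x_i` for some `δ ∈ MB_∞`. -/
def GenDvdR (i : ℕ) (β : MB) : Prop := ∃ δ : MB, β = δ * X i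

/-- The set `SB_n` of simple braids in `MB_n`: products of words in the
generators `x_1, …, x_{n-1}` in which each generator appears at most once. -/
def SB (n : ℕ) : Set MB :=
  {β | ∃ w : List ℕ, w.Nodup ∧ (∀ i ∈ w, 1 ≤ i ∧ i < n) ∧ β = (w.map X).prod}

/-- The simple centralizer `C_n(β)` of `β` in `SB_n`. -/
def C (n : ℕ) (β : MB) : Set MB := {γ ∈ SB n | β * γ = γ * β}

/-- `c_n(β)`, the cardinality of the simple centralizer `C_n(β)`. -/
noncomputable def c (n : ℕ) (β : MB) : ℕ := (C n β).ncard

/-!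
A simple braid is determined by its support `T` and, for each pair of generators `x_i, x_{i+1}`
in `T`, by which of the two comes first: all other pairs commute. Both data can be read off the
braid, the support through a morphism to finite sets and the order of `x_i, x_{i+1}` through the
image permutation, which sends `i + 1` above `i + 1` exactly when `x_i` comes first. So there are
`∑_{T ⊆ A} 2 ^ #(edges of T)` simple braids with support in `A`.

The permutation also shows that a simple braid commuting with `x_k` avoids `x_{k-1}` and
`x_{k+1}`, so `C_{n+m}(x_{n-1})` is the set of simple braids supported in
`[1, n-3] ∪ {n-1} ∪ [n+1, n+m-1]`. The count is multiplicative over blocks at distance at least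
two, and equals `F_{2p+1}` for an interval of length `p`; this gives `F_{2n-5} · F_3 · F_{2m-1}`.
-/

open Equiv Finset

def MB.lift {M : Type*} [Monoid M] (g : ℕ → M)
    (hbraid : ∀ i, g (i + 1) * g i * g (i + 1) = g i * g (i + 1) * g i)
    (hfar : ∀ i j, i + 2 ≤ j → g i * g j = g j * g i) : MB →* M :=
  braidCon.lift (FreeMonoid.lift fun i : ℕ+ => g i) <|
    show braidCon ≤ _ from Con.conGen_le.mpr <| by
    rintro _ _ (⟨i, rfl, rfl⟩ | ⟨i, j, hij, rfl, rfl⟩) <;>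
      simp only [Con.ker_rel, map_mul, FreeMonoid.lift_eval_of, PNat.add_coe, PNat.val_ofNat]
    · exact hbraid i
    · exact hfar i j (by exact_mod_cast hij)

lemma X_eq_mk {i : ℕ} (hi : 1 ≤ i) : X i = braidCon.mk' (FreeMonoid.of ⟨i, hi⟩) := by
  simp only [X, braidGen, max_eq_left hi]

lemma MB.lift_X {M : Type*} [Monoid M] {g : ℕ → M} {hbraid hfar} {i : ℕ} (hi : 1 ≤ i) :
    MB.lift g hbraid hfar (X i) = g i := by
  rw [X_eq_mk hi, MB.lift, Con.lift_mk']
  exact FreeMonoid.lift_eval_of _ _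

lemma X_commute_X {i j : ℕ} (hi : 1 ≤ i) (hij : i + 2 ≤ j) : Commute (X i) (X j) := by
  rw [X_eq_mk hi, X_eq_mk (by omega), Commute, SemiconjBy, ← map_mul, ← map_mul]
  exact braidCon.eq.2 <| ConGen.Rel.of _ _ <| Or.inr ⟨_, _, by exact_mod_cast hij, rfl, rfl⟩

def wordProd (w : List ℕ) : MB := (w.map X).prod

@[simp] lemma wordProd_nil : wordProd [] = 1 := rfl

@[simp] lemma wordProd_cons (i : ℕ) (w : List ℕ) : wordProd (i :: w) = X i * wordProd w := by
  simp [wordProd]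

@[simp] lemma wordProd_append (u v : List ℕ) : wordProd (u ++ v) = wordProd u * wordProd v := by
  simp [wordProd]

lemma MB.lift_wordProd {M : Type*} [Monoid M] {g : ℕ → M} {hbraid hfar} {w : List ℕ}
    (hw : ∀ i ∈ w, 1 ≤ i) : MB.lift g hbraid hfar (wordProd w) = (w.map g).prod := by
  induction w with
  | nil => simp
  | cons a w ih =>
    simp only [List.forall_mem_cons] at hw
    simp [MB.lift_X hw.1, ih hw.2]

lemma commute_X_wordProd {k : ℕ} {w : List ℕ} (h : ∀ i ∈ w, Commute (X k) (X i)) :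
    Commute (X k) (wordProd w) :=
  Commute.list_prod_right _ _ <| by simpa using h

def swapsProd (w : List ℕ) : Perm ℕ := (w.map fun i => swap i (i + 1)).prod

@[simp] lemma swapsProd_cons (i : ℕ) (w : List ℕ) :
    swapsProd (i :: w) = swap i (i + 1) * swapsProd w := by
  simp [swapsProd]

lemma swapsProd_append_cons_apply (u v : List ℕ) (i x : ℕ) :
    swapsProd (u ++ i :: v) x = swapsProd u (swap i (i + 1) (swapsProd v x)) := by
  simp [swapsProd, Perm.mul_apply]

lemma swapsProd_reverse (w : List ℕ) : swapsProd w.reverse = (swapsProd w)⁻¹ := by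
  simp [swapsProd, List.prod_inv_reverse, List.map_reverse, Function.comp_def]

lemma swapsProd_apply_le_iff {w : List ℕ} {t : ℕ} (ht : t ∉ w) (x : ℕ) :
    swapsProd w x ≤ t ↔ x ≤ t := by
  induction w with
  | nil => simp [swapsProd]
  | cons a w ih =>
    simp only [List.mem_cons, not_or] at ht
    rw [swapsProd_cons, Perm.mul_apply, ← ih ht.2, swap_apply_def]
    split_ifs <;> omega

lemma swapsProd_apply_succ {w : List ℕ} {i : ℕ} (hi : i ∉ w) (hi' : i + 1 ∉ w) :
    swapsProd w (i + 1) = i + 1 := by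
  have h₁ := (swapsProd_apply_le_iff hi (i + 1)).not.2 (by omega)
  have h₂ := (swapsProd_apply_le_iff hi' (i + 1)).2 le_rfl
  omega

lemma add_two_le_swapsProd_apply {u v : List ℕ} {i : ℕ} (hw : (u ++ (i + 1) :: v).Nodup)
    (hv : i ∉ v) : i + 2 ≤ swapsProd (u ++ (i + 1) :: v) (i + 1) := by
  rw [List.nodup_middle, List.nodup_cons, List.mem_append, not_or] at hw
  rw [swapsProd_append_cons_apply, swapsProd_apply_succ hv hw.1.2, swap_apply_left]
  have := (swapsProd_apply_le_iff hw.1.1 (i + 1 + 1)).not.2 (by omega)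
  omega

lemma swapsProd_apply_succ_le {u v : List ℕ} {i : ℕ} (hw : (u ++ i :: v).Nodup)
    (hv : i + 1 ∉ v) : swapsProd (u ++ i :: v) (i + 1) ≤ i := by
  rw [List.nodup_middle, List.nodup_cons, List.mem_append, not_or] at hw
  rw [swapsProd_append_cons_apply, swapsProd_apply_succ hw.1.2 hv, swap_apply_right]
  exact (swapsProd_apply_le_iff hw.1.1 i).2 le_rfl

/-- Reversing the word inverts the permutation, so we may choose which of `i`, `i + 1` comes
first. -/
lemma add_two_le_swapsProd_apply_or_inv {w : List ℕ} {i : ℕ} (hw : w.Nodup) (h : i + 1 ∈ w) :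
    i + 2 ≤ swapsProd w (i + 1) ∨ i + 2 ≤ (swapsProd w)⁻¹ (i + 1) := by
  obtain ⟨u, v, rfl⟩ := List.append_of_mem h
  by_cases hv : i ∈ v
  · right
    have hu : i ∉ u := fun hiu => (List.nodup_append.1 hw).2.2 i hiu i (by simp [hv]) rfl
    have hrev : (u ++ (i + 1) :: v).reverse = v.reverse ++ (i + 1) :: u.reverse := by simp
    rw [← swapsProd_reverse, hrev]
    exact add_two_le_swapsProd_apply (hrev ▸ List.nodup_reverse.2 hw) (by simpa using hu)
  · exact .inl (add_two_le_swapsProd_apply hw hv)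

lemma swapsProd_apply_succ_le_or_inv {w : List ℕ} {i : ℕ} (hw : w.Nodup) (h : i ∈ w) :
    swapsProd w (i + 1) ≤ i ∨ (swapsProd w)⁻¹ (i + 1) ≤ i := by
  obtain ⟨u, v, rfl⟩ := List.append_of_mem h
  by_cases hv : i + 1 ∈ v
  · right
    have hu : i + 1 ∉ u := fun hiu => (List.nodup_append.1 hw).2.2 _ hiu _ (by simp [hv]) rfl
    have hrev : (u ++ i :: v).reverse = v.reverse ++ i :: u.reverse := by simp
    rw [← swapsProd_reverse, hrev]
    exact swapsProd_apply_succ_le (hrev ▸ List.nodup_reverse.2 hw) (by simpa using hu)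
  · exact .inl (swapsProd_apply_succ_le hw hv)

lemma Equiv.Perm.apply_eq_or_apply_eq_of_commute_swap {α : Type*} [DecidableEq α] {a b : α}
    {σ : Perm α} (hab : a ≠ b) (h : Commute (swap a b) σ) : σ a = a ∨ σ a = b := by
  by_contra! hσ
  have := congr($(h.eq) a)
  rw [Perm.mul_apply, Perm.mul_apply, swap_apply_left, swap_apply_of_ne_of_ne hσ.1 hσ.2] at this
  exact hab (σ.injective this)

lemma not_commute_swap_swapsProd {w : List ℕ} {k : ℕ} (hw : w.Nodup) (hk : 1 ≤ k)
    (h : k + 1 ∈ w ∨ k - 1 ∈ w) : ¬ Commute (swap k (k + 1)) (swapsProd w) := by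
  intro hc
  have hc' : Commute (swap (k + 1) k) (swapsProd w) := swap_comm k (k + 1) ▸ hc
  have h₁ := Perm.apply_eq_or_apply_eq_of_commute_swap (by omega) hc
  have h₂ := Perm.apply_eq_or_apply_eq_of_commute_swap (by omega) hc.inv_right
  have h₃ := Perm.apply_eq_or_apply_eq_of_commute_swap (by omega) hc'
  have h₄ := Perm.apply_eq_or_apply_eq_of_commute_swap (by omega) hc'.inv_right
  rcases h with h | h
  · have := add_two_le_swapsProd_apply_or_inv hw h
    omega
  · have := swapsProd_apply_succ_le_or_inv hw h
    rw [Nat.sub_add_cancel hk] at this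
    omega

def permHom : MB →* Perm ℕ :=
  MB.lift (fun i => swap i (i + 1))
    (fun i => by ext x; simp only [Perm.mul_apply, swap_apply_def]; split_ifs <;> omega)
    (fun i j hij => by ext x; simp only [Perm.mul_apply, swap_apply_def]; split_ifs <;> omega)

lemma permHom_wordProd {w : List ℕ} (hw : ∀ i ∈ w, 1 ≤ i) :
    permHom (wordProd w) = swapsProd w :=
  MB.lift_wordProd hw

/-- The support of `β` is `supportHom β ∅`. -/
def supportHom : MB →* Function.End (Finset ℕ) :=
  MB.lift insert
    (fun i => funext fun s => show insert (i + 1) (insert i (insert (i + 1) s))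
        = insert i (insert (i + 1) (insert i s)) by
      ext x; simp only [mem_insert]; tauto)
    (fun i j _ => funext fun s => Finset.insert_comm i j s)

lemma supportHom_wordProd {w : List ℕ} (hw : ∀ i ∈ w, 1 ≤ i) :
    supportHom (wordProd w) ∅ = w.toFinset := by
  rw [show supportHom (wordProd w) = (w.map insert : List (Function.End (Finset ℕ))).prod
    from MB.lift_wordProd hw]
  clear hw
  induction w with
  | nil => rfl
  | cons a w ih => rw [List.toFinset_cons, ← ih]; rfl

lemma commute_X_wordProd_iff {k : ℕ} {w : List ℕ} (hk : 1 ≤ k) (hw : w.Nodup)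
    (hw₁ : ∀ i ∈ w, 1 ≤ i) : Commute (X k) (wordProd w) ↔ k + 1 ∉ w ∧ k - 1 ∉ w := by
  constructor
  · intro h
    have hπ := h.map permHom
    rw [permHom_wordProd hw₁, permHom, MB.lift_X hk] at hπ
    exact not_or.1 fun h' => not_commute_swap_swapsProd hw hk h' hπ
  · rintro ⟨h₁, h₂⟩
    refine commute_X_wordProd fun i hi => ?_
    have := hw₁ i hi
    rcases lt_trichotomy i k with hik | rfl | hik
    · exact (X_commute_X this (by grind)).symm
    · exact .refl _
    · exact X_commute_X hk (by grind)

def simpleOn (A : Finset ℕ) : Set MB :=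
  {γ | ∃ w : List ℕ, w.Nodup ∧ (∀ i ∈ w, i ∈ A) ∧ γ = wordProd w}

lemma C_X_eq_simpleOn {n k : ℕ} (hk : 1 ≤ k) :
    C n (X k) = simpleOn (Ico 1 n \ {k - 1, k + 1}) := by
  ext γ
  simp only [C, SB, simpleOn, Set.mem_ofPred_eq, mem_sdiff, mem_Ico, mem_insert, mem_singleton]
  constructor
  · rintro ⟨⟨w, hw, hwn, rfl⟩, hc⟩
    have := (commute_X_wordProd_iff hk hw fun i hi => (hwn i hi).1).1 hc
    exact ⟨w, hw, fun i hi => ⟨hwn i hi, by grind⟩, rfl⟩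
  · rintro ⟨w, hw, hwA, rfl⟩
    refine ⟨⟨w, hw, fun i hi => (hwA i hi).1, rfl⟩, ?_⟩
    exact (commute_X_wordProd_iff hk hw fun i hi => (hwA i hi).1.1).2 ⟨by grind, by grind⟩

def pathEdges (T : Finset ℕ) : Finset ℕ := {i ∈ T | i + 1 ∈ T}

lemma mem_pathEdges {T : Finset ℕ} {i : ℕ} : i ∈ pathEdges T ↔ i ∈ T ∧ i + 1 ∈ T :=
  mem_filter

lemma pathEdges_mono {T T' : Finset ℕ} (h : T ⊆ T') : pathEdges T ⊆ pathEdges T' :=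
  fun _ hi => mem_pathEdges.2 ⟨h (mem_pathEdges.1 hi).1, h (mem_pathEdges.1 hi).2⟩

/-- The word in the letters of `T ∩ [1, p]` in which, for each edge `{i, i + 1}` of `T`,
the letter `i` comes before `i + 1` exactly when `i ∈ O`. -/
def canonWord (T O : Finset ℕ) : ℕ → List ℕ
  | 0 => []
  | p + 1 =>
    if p + 1 ∈ T then
      if p ∈ O then canonWord T O p ++ [p + 1] else (p + 1) :: canonWord T O p
    else canonWord T O p

section canonWord

variable {T O : Finset ℕ}

lemma mem_canonWord {p x : ℕ} : x ∈ canonWord T O p ↔ x ∈ T ∧ 1 ≤ x ∧ x ≤ p := by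
  induction p with
  | zero => simp [canonWord]; omega
  | succ p ih =>
    rw [canonWord]
    split_ifs <;> simp only [List.mem_append, List.mem_cons, ih] <;> grind

lemma nodup_canonWord (p : ℕ) : (canonWord T O p).Nodup := by
  induction p with
  | zero => simp [canonWord]
  | succ p ih =>
    have h : p + 1 ∉ canonWord T O p := by simp [mem_canonWord]
    rw [canonWord]
    split_ifs
    · exact ih.append (List.nodup_singleton _) (by simpa using h)
    · exact ih.cons h
    · exact ih

lemma canonWord_insert_of_lt {p q : ℕ} (h : p < q) :
    canonWord (insert q T) O p = canonWord T O p := by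
  induction p with
  | zero => rfl
  | succ p ih => simp only [canonWord, mem_insert, ih (by omega), show p + 1 ≠ q by omega, false_or]

lemma canonWord_insert_orient {p q : ℕ} (h : p ≤ q) :
    canonWord T (insert q O) p = canonWord T O p := by
  induction p with
  | zero => rfl
  | succ p ih => simp only [canonWord, mem_insert, ih (by omega), show p ≠ q by omega, false_or]

lemma exists_canonWord_eq_append {p q : ℕ} (h : q ≤ p) :
    ∃ L R, canonWord T O p = L ++ canonWord T O q ++ R ∧ ∀ x ∈ R, q < x := by
  induction p, h using Nat.le_induction with
  | base => exact ⟨[], [], by simp, by simp⟩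
  | succ p hqp ih =>
    obtain ⟨L, R, h, hR⟩ := ih
    rw [canonWord]
    split_ifs
    · exact ⟨L, R ++ [p + 1], by simp [h], by grind⟩
    · exact ⟨(p + 1) :: L, R, by simp [h], hR⟩
    · exact ⟨L, R, h, hR⟩

lemma toFinset_canonWord {p : ℕ} (hT : ∀ x ∈ T, 1 ≤ x ∧ x ≤ p) :
    (canonWord T O p).toFinset = T := by
  ext x
  simp only [List.mem_toFinset, mem_canonWord]
  exact ⟨And.left, fun hx => ⟨hx, hT x hx⟩⟩

lemma add_two_le_swapsProd_canonWord_iff {p i : ℕ} (hT : ∀ x ∈ T, 1 ≤ x ∧ x ≤ p)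
    (hi : i ∈ pathEdges T) : i + 2 ≤ swapsProd (canonWord T O p) (i + 1) ↔ i ∈ O := by
  rw [mem_pathEdges] at hi
  obtain ⟨L, R, hLR, hR⟩ := exists_canonWord_eq_append (T := T) (O := O) (hT _ hi.2).2
  have hnd := nodup_canonWord (T := T) (O := O) p
  rw [hLR, canonWord, if_pos hi.2] at hnd ⊢
  by_cases hO : i ∈ O
  · rw [if_pos hO] at hnd ⊢
    have hw : L ++ (canonWord T O i ++ [i + 1]) ++ R = (L ++ canonWord T O i) ++ (i + 1) :: R := by
      simp
    rw [hw] at hnd ⊢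
    exact iff_of_true (add_two_le_swapsProd_apply hnd fun h => by grind) hO
  · rw [if_neg hO] at hnd ⊢
    have hi' : i ∈ canonWord T O i := mem_canonWord.2 ⟨hi.1, (hT i hi.1).1, le_rfl⟩
    obtain ⟨a, b, hab⟩ := List.append_of_mem hi'
    have hb : ∀ x ∈ b, x ≤ i := fun x hx =>
      (mem_canonWord (T := T) (O := O)).1 (by rw [hab]; simp [hx]) |>.2.2
    have hw : L ++ ((i + 1) :: canonWord T O i) ++ R = (L ++ (i + 1) :: a) ++ i :: (b ++ R) := by
      simp [hab]
    rw [hw] at hnd ⊢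
    have := swapsProd_apply_succ_le hnd fun h => by grind
    exact iff_of_false (by omega) hO

end canonWord

/-- The largest letter `p + 1` commutes with every letter except `p`, so it can be moved to the
end of the word if `p` precedes it and to the front otherwise. -/
lemma exists_wordProd_eq_canonWord (p : ℕ) {w : List ℕ} (hw : w.Nodup)
    (hwp : ∀ x ∈ w, 1 ≤ x ∧ x ≤ p) :
    ∃ O ⊆ pathEdges w.toFinset, wordProd w = wordProd (canonWord w.toFinset O p) := by
  induction p generalizing w with
  | zero =>
    obtain rfl : w = [] := List.eq_nil_iff_forall_not_mem.2 fun x hx => by grind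
    exact ⟨∅, empty_subset _, rfl⟩
  | succ p ih =>
    by_cases hp : p + 1 ∈ w
    swap
    · obtain ⟨O, hO, h⟩ := ih hw fun x hx => ⟨(hwp x hx).1, by grind⟩
      exact ⟨O, hO, by rwa [canonWord, if_neg (by simpa using hp)]⟩
    obtain ⟨u, v, rfl⟩ := List.append_of_mem hp
    rw [List.nodup_middle, List.nodup_cons] at hw
    have huv : ∀ x ∈ u ++ v, 1 ≤ x ∧ x ≤ p := fun x hx => by
      have := hwp x (by simp only [List.mem_append, List.mem_cons] at hx ⊢; tauto)
      have : x ≠ p + 1 := fun e => hw.1 (e ▸ hx)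
      omega
    obtain ⟨O, hO, h⟩ := ih hw.2 huv
    set T := (u ++ v).toFinset
    have hT : (u ++ (p + 1) :: v).toFinset = insert (p + 1) T := by ext; simp [T]
    have hTp : T ⊆ insert (p + 1) T := subset_insert _ _
    have hX : ∀ x ∈ u ++ v, x ≠ p → Commute (X (p + 1)) (X x) := fun x hx hxp =>
      (X_commute_X (huv x hx).1 (by grind)).symm
    rw [hT]
    by_cases hpu : p ∈ u
    · refine ⟨insert p O, insert_subset ?_ (hO.trans (pathEdges_mono hTp)), ?_⟩
      · simp [mem_pathEdges, T, hpu]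
      have hv : Commute (X (p + 1)) (wordProd v) := commute_X_wordProd fun x hx =>
        hX x (by simp [hx]) fun hxp => (List.nodup_append.1 hw.2).2.2 p hpu p (hxp ▸ hx) rfl
      rw [canonWord, if_pos (mem_insert_self _ _), if_pos (mem_insert_self _ _),
        canonWord_insert_of_lt (by omega), canonWord_insert_orient le_rfl,
        wordProd_append (canonWord T O p), ← h]
      simp only [wordProd_append, wordProd_cons, wordProd_nil, hv.eq, mul_assoc, mul_one]
    · refine ⟨O, hO.trans (pathEdges_mono hTp), ?_⟩
      have hu : Commute (X (p + 1)) (wordProd u) := commute_X_wordProd fun x hx =>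
        hX x (by simp [hx]) fun hxp => hpu (hxp ▸ hx)
      have hpO : p ∉ O := fun hpO => hw.1 (by simpa [T] using (mem_pathEdges.1 (hO hpO)).2)
      rw [canonWord, if_pos (mem_insert_self _ _), if_neg hpO, canonWord_insert_of_lt (by omega),
        wordProd_cons (p + 1) (canonWord T O p), ← h]
      simp only [wordProd_append, wordProd_cons, ← mul_assoc, hu.eq]

def orientedSupports (A : Finset ℕ) : Finset ((_ : Finset ℕ) × Finset ℕ) :=
  A.powerset.sigma fun T => (pathEdges T).powerset

def simpleCount (A : Finset ℕ) : ℕ := ∑ T ∈ A.powerset, 2 ^ #(pathEdges T)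

lemma card_orientedSupports (A : Finset ℕ) : #(orientedSupports A) = simpleCount A := by
  simp [orientedSupports, simpleCount, card_sigma, card_powerset]

lemma mem_orientedSupports {A : Finset ℕ} {d : (_ : Finset ℕ) × Finset ℕ} :
    d ∈ orientedSupports A ↔ d.1 ⊆ A ∧ d.2 ⊆ pathEdges d.1 := by
  simp [orientedSupports]

def canonBraid (p : ℕ) (d : (_ : Finset ℕ) × Finset ℕ) : MB := wordProd (canonWord d.1 d.2 p)

section orientedSupports

variable {A : Finset ℕ} {p : ℕ} (hA : ∀ x ∈ A, 1 ≤ x ∧ x ≤ p)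
include hA

lemma simpleOn_eq_image_canonBraid : simpleOn A = canonBraid p '' orientedSupports A := by
  ext γ
  constructor
  · rintro ⟨w, hw, hwA, rfl⟩
    obtain ⟨O, hO, h⟩ := exists_wordProd_eq_canonWord p hw fun x hx => hA x (hwA x hx)
    refine ⟨⟨w.toFinset, O⟩, mem_orientedSupports.2 ⟨?_, hO⟩, h.symm⟩
    exact fun x hx => hwA x (List.mem_toFinset.1 hx)
  · rintro ⟨⟨T, O⟩, hd, rfl⟩
    exact ⟨_, nodup_canonWord p, fun x hx => (mem_orientedSupports.1 hd).1 (mem_canonWord.1 hx).1,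
      rfl⟩

lemma injOn_canonBraid : Set.InjOn (canonBraid p) (orientedSupports A) := by
  rintro ⟨T, O⟩ hd ⟨T', O'⟩ hd' h
  unfold canonBraid at h
  rw [mem_coe, mem_orientedSupports] at hd hd'
  have hT : ∀ x ∈ T, 1 ≤ x ∧ x ≤ p := fun x hx => hA x (hd.1 hx)
  have hT' : ∀ x ∈ T', 1 ≤ x ∧ x ≤ p := fun x hx => hA x (hd'.1 hx)
  have hpos {T₀ O₀ : Finset ℕ} : ∀ i ∈ canonWord T₀ O₀ p, 1 ≤ i := fun i hi =>
    (mem_canonWord.1 hi).2.1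
  obtain rfl : T = T' := by
    simpa [supportHom_wordProd hpos, toFinset_canonWord hT, toFinset_canonWord hT'] using
      congr(supportHom $h ∅)
  have hπ := congrArg permHom h
  simp only [permHom_wordProd hpos] at hπ
  obtain rfl : O = O' := by
    ext i
    by_cases hi : i ∈ pathEdges T
    · rw [← add_two_le_swapsProd_canonWord_iff hT hi, ← add_two_le_swapsProd_canonWord_iff hT hi,
        hπ]
    · exact iff_of_false (fun h => hi (hd.2 h)) (fun h => hi (hd'.2 h))
  rfl

end orientedSupports

lemma ncard_simpleOn {A : Finset ℕ} (hA : ∀ x ∈ A, 1 ≤ x) : (simpleOn A).ncard = simpleCount A := by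
  have hA' : ∀ x ∈ A, 1 ≤ x ∧ x ≤ A.sup id := fun x hx => ⟨hA x hx, le_sup (f := id) hx⟩
  rw [simpleOn_eq_image_canonBraid hA', (injOn_canonBraid hA').ncard_image, Set.ncard_coe_finset,
    card_orientedSupports]

lemma sum_powerset_union {α M : Type*} [DecidableEq α] [AddCommMonoid M] {A B : Finset α}
    (h : Disjoint A B) (f : Finset α → M) :
    ∑ T ∈ (A ∪ B).powerset, f T = ∑ T₁ ∈ A.powerset, ∑ T₂ ∈ B.powerset, f (T₁ ∪ T₂) := by
  induction B using Finset.induction_on generalizing f with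
  | empty => simp
  | insert b B hb ih =>
    rw [disjoint_insert_right] at h
    rw [union_insert, sum_powerset_insert (by simp [h.1, hb]), ih h.2, ih h.2]
    simp only [sum_powerset_insert hb, sum_add_distrib, union_insert]

lemma pathEdges_union {T₁ T₂ : Finset ℕ} (h : ∀ a ∈ T₁, ∀ b ∈ T₂, a + 2 ≤ b) :
    pathEdges (T₁ ∪ T₂) = pathEdges T₁ ∪ pathEdges T₂ := by
  ext x
  simp only [mem_pathEdges, mem_union]
  grind

lemma simpleCount_union {A B : Finset ℕ} (h : ∀ a ∈ A, ∀ b ∈ B, a + 2 ≤ b) :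
    simpleCount (A ∪ B) = simpleCount A * simpleCount B := by
  have hd : Disjoint A B := disjoint_left.2 fun a ha hb => by have := h a ha a hb; omega
  rw [simpleCount, sum_powerset_union hd, simpleCount, simpleCount, sum_mul_sum]
  refine sum_congr rfl fun T₁ h₁ => sum_congr rfl fun T₂ h₂ => ?_
  rw [mem_powerset] at h₁ h₂
  have h' : ∀ a ∈ T₁, ∀ b ∈ T₂, a + 2 ≤ b := fun a ha b hb => h a (h₁ ha) b (h₂ hb)
  rw [pathEdges_union h', card_union_of_disjoint, pow_add]
  exact disjoint_left.2 fun a ha hb => by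
    have := h' a (mem_pathEdges.1 ha).1 a (mem_pathEdges.1 hb).1; omega

lemma pathEdges_insert_of_add_one_lt {T : Finset ℕ} {t : ℕ} (h : ∀ x ∈ T, x + 1 < t) :
    pathEdges (insert t T) = pathEdges T := by
  ext x
  simp only [mem_pathEdges, mem_insert]
  grind

lemma card_pathEdges_insert_insert {T : Finset ℕ} {t : ℕ} (h : ∀ x ∈ T, x < t) :
    #(pathEdges (insert (t + 1) (insert t T))) = #(pathEdges (insert t T)) + 1 := by
  have : pathEdges (insert (t + 1) (insert t T)) = insert t (pathEdges (insert t T)) := by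
    ext x
    simp only [mem_pathEdges, mem_insert]
    grind
  rw [this, card_insert_of_notMem]
  simp only [mem_pathEdges, mem_insert]
  grind

/-- With `S p` the count for `[a, a + p)` and `G p` that of its subsets containing a new top
point `a + p`, splitting off the top point gives `S (p+1) = S p + G p` and
`G (p+1) = S p + 2 G p`. -/
lemma simpleCount_Ico_aux (a p : ℕ) :
    simpleCount (Ico a (a + p)) = Nat.fib (2 * p + 1) ∧
      ∑ T ∈ (Ico a (a + p)).powerset, 2 ^ #(pathEdges (insert (a + p) T)) =
        Nat.fib (2 * p + 2) := by
  induction p with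
  | zero => simp [simpleCount, pathEdges]
  | succ p ih =>
    have hI : Ico a (a + p + 1) = insert (a + p) (Ico a (a + p)) :=
      Nat.Ico_succ_right_eq_insert_Ico (by omega)
    have hnot : a + p ∉ Ico a (a + p) := by simp
    have hlt {T} (hT : T ∈ (Ico a (a + p)).powerset) : ∀ x ∈ T, x < a + p := fun x hx => by
      have := mem_Ico.1 (mem_powerset.1 hT hx); omega
    have hG₁ : ∑ T ∈ (Ico a (a + p)).powerset, 2 ^ #(pathEdges (insert (a + p + 1) T)) =
        simpleCount (Ico a (a + p)) := sum_congr rfl fun T hT => by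
      rw [pathEdges_insert_of_add_one_lt fun x hx => by have := hlt hT x hx; omega]
    have hG₂ : ∑ T ∈ (Ico a (a + p)).powerset,
        2 ^ #(pathEdges (insert (a + p + 1) (insert (a + p) T))) =
        2 * ∑ T ∈ (Ico a (a + p)).powerset, 2 ^ #(pathEdges (insert (a + p) T)) := by
      rw [mul_sum]
      exact sum_congr rfl fun T hT => by
        rw [card_pathEdges_insert_insert (hlt hT), pow_succ, mul_comm]
    have hF₁ : Nat.fib (2 * (p + 1) + 1) = Nat.fib (2 * p + 1) + Nat.fib (2 * p + 2) := by
      rw [show 2 * (p + 1) + 1 = 2 * p + 1 + 2 by ring, Nat.fib_add_two]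
    have hF₂ : Nat.fib (2 * (p + 1) + 2) = Nat.fib (2 * p + 2) + Nat.fib (2 * (p + 1) + 1) := by
      rw [show 2 * (p + 1) + 2 = 2 * p + 2 + 2 by ring, Nat.fib_add_two]
      rfl
    rw [← add_assoc, simpleCount, hI, sum_powerset_insert hnot, sum_powerset_insert hnot,
      ← simpleCount, hG₁, hG₂, ih.1, ih.2]
    omega

lemma simpleCount_Ico (a b : ℕ) : simpleCount (Ico a b) = Nat.fib (2 * (b - a) + 1) := by
  rcases le_total a b with h | h
  · obtain ⟨p, rfl⟩ := Nat.exists_eq_add_of_le h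
    rw [Nat.add_sub_cancel_left]
    exact (simpleCount_Ico_aux a p).1
  · simp [simpleCount, pathEdges, Ico_eq_empty_of_le h, Nat.sub_eq_zero_of_le h]

/-- Proposition 1.5 b): `c_{n+m}(x_{n-1}) = 2 · F_{2n-5} · F_{2m-1}` for all
`n ≥ 3` and `m ≥ 1`. -/
theorem card_centralizer_top_gen (n m : ℕ) (hn : 3 ≤ n) (hm : 1 ≤ m) :
    c (n + m) (X (n - 1)) = 2 * Nat.fib (2 * n - 5) * Nat.fib (2 * m - 1) := by
  have hA : Ico 1 (n + m) \ {n - 1 - 1, n - 1 + 1} =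
      Ico 1 (n - 2) ∪ (Ico (n - 1) n ∪ Ico (n + 1) (n + m)) := by
    ext x; simp only [mem_sdiff, mem_Ico, mem_insert, mem_singleton, mem_union]; omega
  have hgap₁ : ∀ a ∈ Ico 1 (n - 2), ∀ b ∈ Ico (n - 1) n ∪ Ico (n + 1) (n + m), a + 2 ≤ b := by
    simp only [mem_Ico, mem_union]; omega
  have hgap₂ : ∀ a ∈ Ico (n - 1) n, ∀ b ∈ Ico (n + 1) (n + m), a + 2 ≤ b := by
    simp only [mem_Ico]; omega
  rw [c, C_X_eq_simpleOn (by omega), ncard_simpleOn fun x hx => (mem_Ico.1 (mem_sdiff.1 hx).1).1,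
    hA, simpleCount_union hgap₁, simpleCount_union hgap₂, simpleCount_Ico, simpleCount_Ico,
    simpleCount_Ico, show n - (n - 1) = 1 by omega, show 2 * (n - 2 - 1) + 1 = 2 * n - 5 by omega,
    show 2 * (n + m - (n + 1)) + 1 = 2 * m - 1 by omega, show Nat.fib (2 * 1 + 1) = 2 from rfl]
  ring
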